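/- Let p : ℝ → [0,∞) be a probability density whose CDF P is continuous and strictly increasing from ℝ onto (0,1), and let z : ℝ → ℝ satisfy Φ(z(x)) = P(x) for all x. Fix α ∈ [0,1], ρ ∈ (−1,1), and w ∈ ℝ, and define the updated density q(x) = [1 − α + α·φ₂(z(x), w; ρ)/(φ(z(x))·φ(w))]·p(x). Then the CDF Q of q satisfies, for every x ∈ ℝ, Q(x) = ∫_{−∞}^{x} q(t) dt = (1 − α)·P(x) + α·Φ((z(x) − ρ·w)/√(1 − ρ²)). That is, the CDF of the copula-updated predictive is P_i(x) = (1 − α_i)·P_{i-1}(x) + α_i·H(P_{i-1}(x), Φ(w); ρ). -/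
import Mathlib


open MeasureTheory
open scoped ENNReal NNReal

/-- `φ`, the standard normal density. -/
noncomputable def stdNormalPDF (z : ℝ) : ℝ :=
  (Real.sqrt (2 * Real.pi))⁻¹ * Real.exp (-z ^ 2 / 2)

/-- `Φ`, the standard normal CDF. -/
noncomputable def stdNormalCDF (z : ℝ) : ℝ := ∫ t in Set.Iic z, stdNormalPDF t

/-- `φ₂(·,·;ρ)`, the standard bivariate normal density with correlation `ρ`. -/
noncomputable def biNormalPDF (z w ρ : ℝ) : ℝ :=
  (2 * Real.pi * Real.sqrt (1 - ρ ^ 2))⁻¹ *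
    Real.exp (-(z ^ 2 - 2 * ρ * z * w + w ^ 2) / (2 * (1 - ρ ^ 2)))


lemma sNP_pos (t : ℝ) : 0 < stdNormalPDF t := by
  unfold stdNormalPDF
  positivity

lemma sNP_cont : Continuous stdNormalPDF := by
  unfold stdNormalPDF; fun_prop

lemma sNP_eq (t : ℝ) : stdNormalPDF t = (Real.sqrt (2 * Real.pi))⁻¹ * Real.exp (-2⁻¹ * t ^ 2) := by
  unfold stdNormalPDF; ring_nf

lemma sNP_integrable : Integrable stdNormalPDF := by
  have h := (integrable_exp_neg_mul_sq (by norm_num : (0:ℝ) < 2⁻¹)).const_mul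
    (Real.sqrt (2 * Real.pi))⁻¹
  exact h.congr (Filter.Eventually.of_forall fun t => (sNP_eq t).symm)

lemma sNP_integral : ∫ t, stdNormalPDF t = 1 := by
  have h := integral_gaussian 2⁻¹
  have h2 : Real.pi / 2⁻¹ = 2 * Real.pi := by ring
  rw [h2] at h
  calc ∫ t, stdNormalPDF t = ∫ t, (Real.sqrt (2 * Real.pi))⁻¹ * Real.exp (-2⁻¹ * t ^ 2) := by
        exact integral_congr_ae (Filter.Eventually.of_forall fun t => sNP_eq t)
    _ = (Real.sqrt (2 * Real.pi))⁻¹ * Real.sqrt (2 * Real.pi) := by rw [integral_const_mul, h]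
    _ = 1 := inv_mul_cancel₀ (Real.sqrt_ne_zero'.mpr (by positivity))

lemma sNC_mono : StrictMono stdNormalCDF := by
  intro a b hab
  have hsplit : stdNormalCDF b = stdNormalCDF a + ∫ t in Set.Ioc a b, stdNormalPDF t := by
    unfold stdNormalCDF
    rw [← setIntegral_union (Set.Iic_disjoint_Ioc le_rfl) measurableSet_Ioc
      sNP_integrable.integrableOn sNP_integrable.integrableOn, Set.Iic_union_Ioc_eq_Iic hab.le]
  have hpos : 0 < ∫ t in Set.Ioc a b, stdNormalPDF t := by
    rw [← intervalIntegral.integral_of_le hab.le]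
    exact intervalIntegral.intervalIntegral_pos_of_pos
      (sNP_integrable.intervalIntegrable) sNP_pos hab
  linarith

lemma sNC_mem (a : ℝ) : stdNormalCDF a ∈ Set.Ioo (0:ℝ) 1 := by
  constructor
  · have h1 : (0:ℝ) ≤ stdNormalCDF (a - 1) :=
      setIntegral_nonneg measurableSet_Iic fun t _ => (sNP_pos t).le
    have := sNC_mono (show a - 1 < a by linarith)
    linarith
  · have h1 : stdNormalCDF (a + 1) ≤ 1 := by
      rw [← sNP_integral]
      exact setIntegral_le_integral sNP_integrable
        (Filter.Eventually.of_forall fun t => (sNP_pos t).le)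
    have := sNC_mono (show a < a + 1 by linarith)
    linarith

lemma affine_Iic (f : ℝ → ℝ) {c : ℝ} (hc : 0 < c) (b a : ℝ) :
    ∫ s in Set.Iic a, f ((s - b) / c) = c * ∫ u in Set.Iic ((a - b) / c), f u := by
  have hind : ∀ s : ℝ, (Set.Iic a).indicator (fun s => f ((s - b) / c)) s
      = (Set.Iic ((a - b) / c)).indicator f ((s - b) / c) := by
    intro s
    have hiff : (s - b) / c ≤ (a - b) / c ↔ s ≤ a := by
      constructor
      · intro h
        have := mul_le_mul_of_nonneg_right h hc.le
        rw [div_mul_cancel₀ _ hc.ne', div_mul_cancel₀ _ hc.ne'] at this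
        linarith
      · intro h
        gcongr
    simp only [Set.indicator_apply, Set.mem_Iic, hiff]
  rw [← integral_indicator measurableSet_Iic]
  calc ∫ s, (Set.Iic a).indicator (fun s => f ((s - b) / c)) s
      = ∫ s, (Set.Iic ((a - b) / c)).indicator f ((s - b) / c) := by
        exact integral_congr_ae (Filter.Eventually.of_forall hind)
    _ = ∫ s, (Set.Iic ((a - b) / c)).indicator f (s / c) := by
        simp_rw [sub_eq_add_neg]
        exact integral_add_right_eq_self (fun u => (Set.Iic ((a - b) / c)).indicator f (u / c)) (-b)
    _ = |c| • ∫ u, (Set.Iic ((a - b) / c)).indicator f u :=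
        Measure.integral_comp_div ((Set.Iic ((a - b) / c)).indicator f) c
    _ = c * ∫ u in Set.Iic ((a - b) / c), f u := by
        rw [integral_indicator measurableSet_Iic, abs_of_pos hc, smul_eq_mul]

lemma ratio {ρ : ℝ} (hρ : ρ ∈ Set.Ioo (-1:ℝ) 1) (s w : ℝ) :
    biNormalPDF s w ρ / stdNormalPDF w
      = (Real.sqrt (1 - ρ ^ 2))⁻¹ * stdNormalPDF ((s - ρ * w) / Real.sqrt (1 - ρ ^ 2)) := by
  have h1 : (0:ℝ) < 1 - ρ ^ 2 := by nlinarith [hρ.1, hρ.2]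
  set c := Real.sqrt (1 - ρ ^ 2) with hcdef
  have hc2 : c ^ 2 = 1 - ρ ^ 2 := Real.sq_sqrt h1.le
  have hcpos : (0:ℝ) < c := Real.sqrt_pos.mpr h1
  have h2π : (0:ℝ) < 2 * Real.pi := by positivity
  have hsq : Real.sqrt (2 * Real.pi) * Real.sqrt (2 * Real.pi) = 2 * Real.pi :=
    Real.mul_self_sqrt h2π.le
  rw [div_eq_iff (sNP_pos w).ne']
  unfold biNormalPDF stdNormalPDF
  rw [div_pow, hc2]
  rw [show (c⁻¹ * ((Real.sqrt (2 * Real.pi))⁻¹ * Real.exp (-((s - ρ * w) ^ 2 / (1 - ρ ^ 2)) / 2)))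
        * ((Real.sqrt (2 * Real.pi))⁻¹ * Real.exp (-w ^ 2 / 2))
      = (c⁻¹ * (Real.sqrt (2 * Real.pi))⁻¹ * (Real.sqrt (2 * Real.pi))⁻¹)
        * Real.exp (-((s - ρ * w) ^ 2 / (1 - ρ ^ 2)) / 2 + -w ^ 2 / 2) from by
    rw [Real.exp_add]; ring]
  congr 1
  · rw [← mul_inv, ← mul_inv]
    congr 1
    rw [mul_assoc c _ _, hsq, hcdef]
    ring
  · congr 1
    field_simp
    ring

/-- the CDF of the copula-updated predictive
`q(x) = [1 − α + α·c(P(x), Φ(w); ρ)]·p(x)` is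
`Q(x) = (1 − α)·P(x) + α·Φ((z(x) − ρ·w)/√(1 − ρ²))`, i.e.
`P_i(x) = (1 − α)·P_{i−1}(x) + α·H(P_{i−1}(x), Φ(w); ρ)`. -/
theorem copula_update_cdf
    (p : ℝ → ℝ) (hp_meas : Measurable p) (hp_nonneg : ∀ x, 0 ≤ p x)
    (hp_int : Integrable p) (hp_one : ∫ x, p x = 1)
    (P : ℝ → ℝ) (hP : P = fun x => ∫ t in Set.Iic x, p t)
    (hP_cont : Continuous P) (hP_mono : StrictMono P)
    (hP_range : Set.range P = Set.Ioo (0 : ℝ) 1)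
    (z : ℝ → ℝ) (hz : ∀ x, stdNormalCDF (z x) = P x)
    (α ρ w : ℝ) (hα : α ∈ Set.Icc (0 : ℝ) 1) (hρ : ρ ∈ Set.Ioo (-1 : ℝ) 1) :
    ∀ x, (∫ t in Set.Iic x,
        (1 - α + α * (biNormalPDF (z t) w ρ /
          (stdNormalPDF (z t) * stdNormalPDF w))) * p t) =
      (1 - α) * P x + α * stdNormalCDF ((z x - ρ * w) / Real.sqrt (1 - ρ ^ 2)) := by
  intro x
  have h1 : (0:ℝ) < 1 - ρ ^ 2 := by nlinarith [hρ.1, hρ.2]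
  set c := Real.sqrt (1 - ρ ^ 2) with hcdef
  have hcpos : (0:ℝ) < c := Real.sqrt_pos.mpr h1
  set k : ℝ → ℝ := fun s => biNormalPDF s w ρ / (stdNormalPDF s * stdNormalPDF w) with hk
  have hk_cont : Continuous k := by
    apply Continuous.div
    · unfold biNormalPDF; fun_prop
    · exact sNP_cont.mul continuous_const
    · exact fun s => (mul_pos (sNP_pos s) (sNP_pos w)).ne'
  have hkphi : ∀ s, k s * stdNormalPDF s = c⁻¹ * stdNormalPDF ((s - ρ * w) / c) := by
    intro s
    rw [← ratio hρ s w]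
    simp only [hk]
    field_simp
    rw [div_eq_div_iff (mul_pos (sNP_pos s) (sNP_pos w)).ne' (sNP_pos w).ne']
    ring
  set μ := volume.withDensity (fun t => ENNReal.ofReal (p t)) with hμ
  set ν := volume.withDensity (fun s => ENNReal.ofReal (stdNormalPDF s)) with hν
  have hμIic : ∀ y, μ (Set.Iic y) = ENNReal.ofReal (P y) := by
    intro y
    rw [hμ, withDensity_apply _ measurableSet_Iic,
      ← ofReal_integral_eq_lintegral_ofReal hp_int.integrableOn
        (Filter.Eventually.of_forall fun t => hp_nonneg t), hP]
  have hνIic : ∀ y, ν (Set.Iic y) = ENNReal.ofReal (stdNormalCDF y) := by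
    intro y
    rw [hν, withDensity_apply _ measurableSet_Iic,
      ← ofReal_integral_eq_lintegral_ofReal sNP_integrable.integrableOn
        (Filter.Eventually.of_forall fun t => (sNP_pos t).le)]
    rfl
  haveI : IsFiniteMeasure μ := by
    constructor
    rw [hμ, withDensity_apply _ MeasurableSet.univ, Measure.restrict_univ,
      ← ofReal_integral_eq_lintegral_ofReal hp_int
        (Filter.Eventually.of_forall fun t => hp_nonneg t), hp_one]
    exact ENNReal.ofReal_lt_top
  have hzmono : StrictMono z := by
    intro a b hab
    by_contra hle
    push_neg at hle
    have h2 : stdNormalCDF (z b) ≤ stdNormalCDF (z a) := sNC_mono.monotone hle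
    rw [hz, hz] at h2
    exact absurd (hP_mono hab) (not_lt.mpr h2)
  have hzsurj : Function.Surjective z := by
    intro a
    have hmem : stdNormalCDF a ∈ Set.range P := by rw [hP_range]; exact sNC_mem a
    obtain ⟨x0, hx0⟩ := hmem
    exact ⟨x0, sNC_mono.injective (by rw [hz, hx0])⟩
  have hzmeas : Measurable z := hzmono.monotone.measurable
  have hmap : Measure.map z μ = ν := by
    haveI : IsFiniteMeasure (Measure.map z μ) := Measure.isFiniteMeasure_map μ z
    refine Measure.ext_of_Iic _ _ (fun a => ?_)
    obtain ⟨x0, hx0⟩ := hzsurj a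
    rw [Measure.map_apply hzmeas measurableSet_Iic]
    have hpre : z ⁻¹' Set.Iic a = Set.Iic x0 := by
      ext t
      simp only [Set.mem_preimage, Set.mem_Iic, ← hx0, hzmono.le_iff_le]
    rw [hpre, hμIic, hνIic, ← hx0, hz]
  have hρw_int : Integrable (fun s => k s * stdNormalPDF s) := by
    have hint : Integrable (fun s => c⁻¹ * stdNormalPDF ((s - ρ * w) / c)) :=
      (((sNP_integrable.comp_div hcpos.ne').comp_sub_right (ρ * w))).const_mul _
    exact hint.congr (Filter.Eventually.of_forall fun s => (hkphi s).symm)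
  -- transfer lemmas
  have hflt : ∀ᵐ (t : ℝ), ENNReal.ofReal (p t) < ⊤ :=
    Filter.Eventually.of_forall fun t => ENNReal.ofReal_lt_top
  have hflt' : ∀ᵐ (s : ℝ), ENNReal.ofReal (stdNormalPDF s) < ⊤ :=
    Filter.Eventually.of_forall fun s => ENNReal.ofReal_lt_top
  have hpmeas' : Measurable fun t => ENNReal.ofReal (p t) := hp_meas.ennreal_ofReal
  have hφmeas' : Measurable fun s => ENNReal.ofReal (stdNormalPDF s) :=
    sNP_cont.measurable.ennreal_ofReal
  have hIntν : ∀ g : ℝ → ℝ, Measurable g →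
      (Integrable g ν ↔ Integrable (fun s => g s * stdNormalPDF s)) := by
    intro g hg
    rw [hν, integrable_withDensity_iff hφmeas' hflt']
    constructor <;> intro h <;>
      exact h.congr (Filter.Eventually.of_forall fun s => by
        simp [ENNReal.toReal_ofReal (sNP_pos s).le])
  have hIntμ : ∀ g : ℝ → ℝ, Measurable g →
      (Integrable g μ ↔ Integrable (fun t => g t * p t)) := by
    intro g hg
    rw [hμ, integrable_withDensity_iff hpmeas' hflt]
    constructor <;> intro h <;>
      exact h.congr (Filter.Eventually.of_forall fun t => by
        simp [ENNReal.toReal_ofReal (hp_nonneg t)])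
  have hInt_comp : ∀ g : ℝ → ℝ, Measurable g → Integrable (fun s => g s * stdNormalPDF s) →
      Integrable (fun t => g (z t) * p t) := by
    intro g hg hgint
    have h1 : Integrable g ν := (hIntν g hg).mpr hgint
    rw [← hmap] at h1
    have h2 : Integrable (g ∘ z) μ :=
      (integrable_map_measure hg.aestronglyMeasurable hzmeas.aemeasurable).mp h1
    exact (hIntμ (g ∘ z) (hg.comp hzmeas)).mp h2
  have hInt_eq : ∀ g : ℝ → ℝ, Measurable g →
      (∫ t, g (z t) * p t) = ∫ s, g s * stdNormalPDF s := by
    intro g hg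
    have e1 : ∫ s, g s ∂ν = ∫ s, g s * stdNormalPDF s := by
      rw [hν]
      rw [show (fun s => ENNReal.ofReal (stdNormalPDF s))
          = (fun s => ((Real.toNNReal (stdNormalPDF s) : ℝ≥0) : ℝ≥0∞)) from rfl]
      rw [integral_withDensity_eq_integral_smul
        (sNP_cont.measurable.real_toNNReal) g]
      exact integral_congr_ae (Filter.Eventually.of_forall fun s => by
        simp [NNReal.smul_def, Real.coe_toNNReal _ (sNP_pos s).le, mul_comm])
    have e2 : ∫ t, g (z t) ∂μ = ∫ t, g (z t) * p t := by
      rw [hμ]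
      rw [show (fun t => ENNReal.ofReal (p t))
          = (fun t => ((Real.toNNReal (p t) : ℝ≥0) : ℝ≥0∞)) from rfl]
      rw [integral_withDensity_eq_integral_smul hp_meas.real_toNNReal (fun t => g (z t))]
      exact integral_congr_ae (Filter.Eventually.of_forall fun t => by
        simp [NNReal.smul_def, Real.coe_toNNReal _ (hp_nonneg t), mul_comm])
    have e3 : ∫ s, g s ∂ν = ∫ t, g (z t) ∂μ := by
      rw [← hmap, integral_map hzmeas.aemeasurable hg.aestronglyMeasurable]
    rw [← e2, ← e3, e1]
  -- main computation
  have hI2 : (∫ t in Set.Iic x, k (z t) * p t) = stdNormalCDF ((z x - ρ * w) / c) := by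
    have hindic : ∀ t, (Set.Iic x).indicator (fun t => k (z t) * p t) t
        = ((Set.Iic (z x)).indicator k) (z t) * p t := by
      intro t
      simp only [Set.indicator_apply, Set.mem_Iic, hzmono.le_iff_le]
      split_ifs with h
      · rfl
      · rw [zero_mul]
    calc (∫ t in Set.Iic x, k (z t) * p t)
        = ∫ t, ((Set.Iic (z x)).indicator k) (z t) * p t := by
          rw [← integral_indicator measurableSet_Iic]
          exact integral_congr_ae (Filter.Eventually.of_forall hindic)
      _ = ∫ s, ((Set.Iic (z x)).indicator k) s * stdNormalPDF s :=
          hInt_eq _ (hk_cont.measurable.indicator measurableSet_Iic)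
      _ = ∫ s in Set.Iic (z x), k s * stdNormalPDF s := by
          rw [← integral_indicator measurableSet_Iic]
          exact integral_congr_ae (Filter.Eventually.of_forall fun s =>
            (Set.indicator_mul_left _ _ _).symm)
      _ = ∫ s in Set.Iic (z x), c⁻¹ * stdNormalPDF ((s - ρ * w) / c) :=
          integral_congr_ae (Filter.Eventually.of_forall fun s => hkphi s)
      _ = c⁻¹ * ∫ s in Set.Iic (z x), stdNormalPDF ((s - ρ * w) / c) := integral_const_mul _ _
      _ = c⁻¹ * (c * ∫ u in Set.Iic ((z x - ρ * w) / c), stdNormalPDF u) := by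
          rw [affine_Iic _ hcpos]
      _ = stdNormalCDF ((z x - ρ * w) / c) := by
          rw [← mul_assoc, inv_mul_cancel₀ hcpos.ne', one_mul]
          rfl
  have hsplit : (∫ t in Set.Iic x,
        (1 - α + α * (biNormalPDF (z t) w ρ /
          (stdNormalPDF (z t) * stdNormalPDF w))) * p t)
      = ∫ t in Set.Iic x, ((1 - α) * p t + α * (k (z t) * p t)) := by
    exact integral_congr_ae (Filter.Eventually.of_forall fun t => by simp only [hk]; ring)
  rw [hsplit, integral_add ((hp_int.const_mul (1 - α)).integrableOn)
    (((hInt_comp k hk_cont.measurable hρw_int).const_mul α).integrableOn),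
    integral_const_mul, integral_const_mul, hI2, hP]
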